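/- (Karlsson–Minton vanishing sum.) Let r ∈ ℕ, let m1, …, mr ∈ ℕ, let B1, …, Br ∈ ℂ with Bj ∉ {0, −1, −2, …} for each j, and let A ∈ ℂ with Re(A) + m1 + ⋯ + mr < 0. Then the series Σ_{k=0}^{∞} [(A)_k ∏_{j=1}^{r} (Bj+mj)_k] / [k! ∏_{j=1}^{r} (Bj)_k] converges absolutely and its sum equals 0. -/

import Mathlib

/-!
Since `(B + m)ₖ / (B)ₖ = (B + k)ₘ / (B)ₘ`, the `k`-th term is, up to the constant factor
`∏ⱼ (Bⱼ)_{mⱼ}`, equal to `(A)ₖ P(k) / k!` for the polynomial `P(x) = ∏ⱼ (x + Bⱼ)_{mⱼ}` of degree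
`M = ∑ⱼ mⱼ`. The series `∑ₖ (A)ₖ P(k) / k!` vanishes whenever `Re A + deg P < 0`, by induction on
the degree: writing `P = P(0) + X Q`, the constant part is the binomial series
`∑ₖ (A)ₖ / k! = (1 - 1)^(-A) = 0`, and the shift `k (A)ₖ / k! = A (A + 1)ₖ₋₁ / (k - 1)!` turns the
`X Q` part into `A` times the same series for `A + 1` and `Q(X + 1)`.

The partial sums of the binomial series at `1` telescope to `(A + 1)_N / N!`, and
`|(A + 1)_N / N!| = ∏_{i<N} |1 + A / (i + 1)| ≤ C · exp (Re A · H_N) ≤ C (N + 1)^(Re A)` (using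
`|1 + z| ≤ exp (Re z + |z|² / 2)`), which both tends to `0` and makes the terms `O(k^(Re A - 1))`.
-/

open Finset

/-- Pochhammer symbol `(a)_k = a (a+1) ⋯ (a+k-1)`. -/
noncomputable def poch (a : ℂ) (k : ℕ) : ℂ := ∏ i ∈ Finset.range k, (a + i)

/-- The Wilson polynomial `W_n(z; t1,t2,t3,t4)` in the variable `z` (with `x = -z²`). -/
noncomputable def wilson (n : ℕ) (z t1 t2 t3 t4 : ℂ) : ℂ :=
  poch (t1 + t2) n * poch (t1 + t3) n * poch (t1 + t4) n *
    ∑ k ∈ Finset.range (n + 1),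
      (poch (-(n : ℂ)) k * poch (t1 + t2 + t3 + t4 + (n : ℂ) - 1) k *
        poch (t1 + z) k * poch (t1 - z) k) /
      ((k.factorial : ℂ) * poch (t1 + t2) k * poch (t1 + t3) k * poch (t1 + t4) k)

open Filter Topology Polynomial
open scoped Nat

lemma poch_succ (a : ℂ) (k : ℕ) : poch a (k + 1) = poch a k * (a + k) :=
  prod_range_succ _ k

lemma poch_succ' (a : ℂ) (k : ℕ) : poch a (k + 1) = a * poch (a + 1) k := by
  rw [poch, prod_range_succ', poch, mul_comm]
  simp only [Nat.cast_add, Nat.cast_one, Nat.cast_zero, add_zero, add_assoc, add_comm (1 : ℂ)]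

lemma poch_add (a : ℂ) (m k : ℕ) : poch a (m + k) = poch a m * poch (a + m) k := by
  rw [poch, prod_range_add, poch, poch]
  simp only [Nat.cast_add, add_assoc]

lemma poch_mul_poch_add_comm (a : ℂ) (m k : ℕ) :
    poch a m * poch (a + m) k = poch a k * poch (a + k) m := by
  rw [← poch_add, ← poch_add, add_comm]

lemma poch_ne_zero {a : ℂ} (h : ∀ n : ℕ, a + n ≠ 0) (k : ℕ) : poch a k ≠ 0 :=
  prod_ne_zero_iff.mpr fun i _ => h i

lemma poch_eq_eval_ascPochhammer (a : ℂ) (k : ℕ) : poch a k = (ascPochhammer ℂ k).eval a := by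
  induction k with
  | zero => simp [poch]
  | succ k ih => rw [poch_succ, ascPochhammer_succ_eval, ih]

lemma Complex.norm_one_add_le_exp (z : ℂ) : ‖1 + z‖ ≤ Real.exp (z.re + ‖z‖ ^ 2 / 2) := by
  have hsq : ‖1 + z‖ ^ 2 = 1 + (2 * z.re + ‖z‖ ^ 2) := by
    rw [Complex.sq_norm, Complex.sq_norm, Complex.normSq_apply, Complex.normSq_apply]
    simp only [Complex.add_re, Complex.add_im, Complex.one_re, Complex.one_im]
    ring
  rw [← pow_le_pow_iff_left₀ (norm_nonneg _) (Real.exp_nonneg _) two_ne_zero, hsq,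
    sq (Real.exp _), ← Real.exp_add]
  rw [show ∀ x : ℝ, x + ‖z‖ ^ 2 / 2 + (x + ‖z‖ ^ 2 / 2) = 2 * x + ‖z‖ ^ 2 by intro; ring]
  linarith [Real.add_one_le_exp (2 * z.re + ‖z‖ ^ 2)]

lemma poch_add_one_div_factorial (a : ℂ) (N : ℕ) :
    poch (a + 1) N / N ! = ∏ i ∈ range N, (1 + a / ((i + 1 : ℝ) : ℂ)) := by
  rw [poch, ← prod_range_add_one_eq_factorial, Nat.cast_prod, ← prod_div_distrib]
  refine prod_congr rfl fun i _ => ?_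
  have : (i : ℂ) + 1 ≠ 0 := by exact_mod_cast i.succ_ne_zero
  push_cast
  field_simp
  ring

lemma exists_norm_poch_add_one_div_factorial_le {a : ℂ} (ha : a.re ≤ 0) :
    ∃ C, ∀ N : ℕ, ‖poch (a + 1) N / (N ! : ℂ)‖ ≤ C * ((N : ℝ) + 1) ^ a.re := by
  have hS : Summable fun i : ℕ => 1 / ((i : ℝ) + 1) ^ 2 := by
    simpa using (Real.summable_one_div_nat_add_rpow 1 2).2 one_lt_two
  refine ⟨Real.exp (‖a‖ ^ 2 / 2 * ∑' i : ℕ, 1 / ((i : ℝ) + 1) ^ 2), fun N => ?_⟩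
  have harmonic_le : a.re * ∑ i ∈ range N, 1 / ((i : ℝ) + 1) ≤ a.re * Real.log (N + 1) := by
    refine mul_le_mul_of_nonpos_left ?_ ha
    simpa [harmonic] using log_add_one_le_harmonic N
  have sq_le : ∑ i ∈ range N, 1 / ((i : ℝ) + 1) ^ 2 ≤ ∑' i : ℕ, 1 / ((i : ℝ) + 1) ^ 2 :=
    hS.sum_le_tsum _ fun _ _ => by positivity
  calc ‖poch (a + 1) N / (N ! : ℂ)‖ = ∏ i ∈ range N, ‖1 + a / ((i + 1 : ℝ) : ℂ)‖ := by
        rw [poch_add_one_div_factorial, norm_prod]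
    _ ≤ ∏ i ∈ range N,
          Real.exp (a.re * (1 / ((i : ℝ) + 1)) + ‖a‖ ^ 2 / 2 * (1 / ((i : ℝ) + 1) ^ 2)) := by
        refine prod_le_prod (fun _ _ => norm_nonneg _) fun i _ => ?_
        refine (Complex.norm_one_add_le_exp _).trans_eq ?_
        rw [Complex.div_ofReal_re, norm_div, Complex.norm_real, Real.norm_of_nonneg (by positivity),
          div_pow]
        ring_nf
    _ = Real.exp (a.re * ∑ i ∈ range N, 1 / ((i : ℝ) + 1) +
          ‖a‖ ^ 2 / 2 * ∑ i ∈ range N, 1 / ((i : ℝ) + 1) ^ 2) := by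
        rw [← Real.exp_sum, sum_add_distrib, mul_sum, mul_sum]
    _ ≤ Real.exp (a.re * Real.log (N + 1) + ‖a‖ ^ 2 / 2 * ∑' i : ℕ, 1 / ((i : ℝ) + 1) ^ 2) := by
        gcongr
    _ = _ := by
        rw [Real.exp_add, Real.rpow_def_of_pos (by positivity), mul_comm, mul_comm a.re]

lemma sum_range_succ_poch_div_factorial (a : ℂ) (N : ℕ) :
    ∑ j ∈ range (N + 1), poch a j / (j ! : ℂ) = poch (a + 1) N / (N ! : ℂ) := by
  induction N with
  | zero => simp [poch]
  | succ N ih =>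
    have : (N : ℂ) + 1 ≠ 0 := by exact_mod_cast N.succ_ne_zero
    rw [sum_range_succ, ih, poch_succ (a + 1), poch_succ' a, Nat.factorial_succ]
    push_cast
    field_simp
    ring

lemma summable_norm_poch_div_factorial {a : ℂ} (ha : a.re < 0) :
    Summable fun k : ℕ => ‖poch a k / (k ! : ℂ)‖ := by
  obtain ⟨C, hC⟩ := exists_norm_poch_add_one_div_factorial_le ha.le
  have hp : Summable fun k : ℕ => ((k : ℝ) + 1) ^ (a.re - 1) := by
    have := (Real.summable_one_div_nat_add_rpow 1 (1 - a.re)).2 (by linarith)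
    refine this.congr fun k => ?_
    rw [abs_of_pos (by positivity), one_div, ← Real.rpow_neg (by positivity), neg_sub]
  rw [← summable_nat_add_iff 1]
  refine Summable.of_nonneg_of_le (fun _ => norm_nonneg _) (fun k => ?_) (hp.mul_left (‖a‖ * C))
  have hk : (0 : ℝ) < k + 1 := by positivity
  calc ‖poch a (k + 1) / ((k + 1) ! : ℂ)‖ = ‖a‖ / (k + 1) * ‖poch (a + 1) k / (k ! : ℂ)‖ := by
        rw [poch_succ', Nat.factorial_succ, Nat.cast_mul, mul_div_mul_comm, norm_mul, norm_div,
          Complex.norm_natCast, Nat.cast_succ]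
    _ ≤ ‖a‖ / (k + 1) * (C * ((k : ℝ) + 1) ^ a.re) := by gcongr; exact hC k
    _ = ‖a‖ * C * ((k : ℝ) + 1) ^ (a.re - 1) := by
        rw [Real.rpow_sub_one hk.ne']
        ring

lemma hasSum_poch_div_factorial {a : ℂ} (ha : a.re < 0) :
    HasSum (fun k : ℕ => poch a k / (k ! : ℂ)) 0 := by
  obtain ⟨C, hC⟩ := exists_norm_poch_add_one_div_factorial_le ha.le
  have hsum := (summable_norm_poch_div_factorial ha).of_norm
  have hpartial : Tendsto (fun N => ∑ j ∈ range (N + 1), poch a j / (j ! : ℂ)) atTop (𝓝 0) := by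
    simp_rw [sum_range_succ_poch_div_factorial]
    rw [tendsto_zero_iff_norm_tendsto_zero]
    refine squeeze_zero (fun _ => norm_nonneg _) hC ?_
    have hrpow := (tendsto_rpow_neg_atTop (neg_pos.mpr ha)).comp
      (tendsto_atTop_add_const_right _ 1 (tendsto_natCast_atTop_atTop (R := ℝ)))
    simpa using hrpow.const_mul C
  rw [hsum.hasSum_iff]
  exact tendsto_nhds_unique ((hsum.hasSum.tendsto_sum_nat).comp (tendsto_add_atTop_nat 1)) hpartial

lemma natDegree_taylor_divX {R : Type*} [Semiring R] (r : R) (p : R[X]) :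
    (taylor r p.divX).natDegree = p.natDegree - 1 := by
  rw [natDegree_taylor, natDegree_divX_eq_natDegree_tsub_one]

noncomputable def pochTerm (A : ℂ) (P : ℂ[X]) (k : ℕ) : ℂ := poch A k * P.eval (k : ℂ) / (k ! : ℂ)

lemma pochTerm_C (A c : ℂ) (k : ℕ) : pochTerm A (C c) k = c * (poch A k / (k ! : ℂ)) := by
  rw [pochTerm, eval_C]
  ring

lemma pochTerm_eq_add (A : ℂ) (P : ℂ[X]) (k : ℕ) :
    pochTerm A P k = P.coeff 0 * (poch A k / (k ! : ℂ)) + pochTerm A (P.divX * X) k := by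
  conv_lhs => rw [← divX_mul_X_add P]
  simp only [pochTerm, eval_add, eval_C]
  ring

lemma pochTerm_mul_X_zero (A : ℂ) (Q : ℂ[X]) : pochTerm A (Q * X) 0 = 0 := by
  simp [pochTerm]

lemma pochTerm_mul_X_succ (A : ℂ) (Q : ℂ[X]) (k : ℕ) :
    pochTerm A (Q * X) (k + 1) = A * pochTerm (A + 1) (taylor 1 Q) k := by
  have : (k : ℂ) + 1 ≠ 0 := by exact_mod_cast k.succ_ne_zero
  simp only [pochTerm, eval_mul, eval_X, taylor_eval, poch_succ', Nat.factorial_succ]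
  push_cast
  field_simp

lemma summable_norm_pochTerm {A : ℂ} {P : ℂ[X]} (h : A.re + P.natDegree < 0) :
    Summable fun k => ‖pochTerm A P k‖ := by
  obtain ⟨n, hn, hA⟩ : ∃ n : ℕ, P.natDegree ≤ n ∧ A.re + n < 0 := ⟨_, le_rfl, h⟩
  clear h
  induction n generalizing A P with
  | zero =>
    rw [eq_C_of_natDegree_le_zero hn]
    simp_rw [pochTerm_C, norm_mul]
    exact (summable_norm_poch_div_factorial (by simpa using hA)).mul_left _
  | succ n ih =>
    have hQ : Summable fun k => ‖pochTerm A (P.divX * X) k‖ := by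
      rw [← summable_nat_add_iff 1]
      simp_rw [pochTerm_mul_X_succ, norm_mul]
      refine (ih (by rw [natDegree_taylor_divX]; omega) ?_).mul_left _
      rw [Complex.add_re, Complex.one_re]
      push_cast at hA
      linarith
    refine Summable.of_nonneg_of_le (fun _ => norm_nonneg _) (fun k => ?_)
      (((summable_norm_poch_div_factorial (a := A) (by push_cast at hA; linarith)).mul_left
        ‖P.coeff 0‖).add hQ)
    rw [pochTerm_eq_add, ← norm_mul]
    exact norm_add_le _ _

lemma hasSum_pochTerm {A : ℂ} {P : ℂ[X]} (h : A.re + P.natDegree < 0) :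
    HasSum (pochTerm A P) 0 := by
  obtain ⟨n, hn, hA⟩ : ∃ n : ℕ, P.natDegree ≤ n ∧ A.re + n < 0 := ⟨_, le_rfl, h⟩
  clear h
  induction n generalizing A P with
  | zero =>
    rw [eq_C_of_natDegree_le_zero hn, funext (pochTerm_C A _), ← mul_zero (P.coeff 0)]
    exact (hasSum_poch_div_factorial (by simpa using hA)).mul_left _
  | succ n ih =>
    have hQ : HasSum (pochTerm A (P.divX * X)) 0 := by
      rw [← hasSum_nat_add_iff' 1]
      simp only [pochTerm_mul_X_succ, sum_range_one, pochTerm_mul_X_zero, sub_zero]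
      rw [← mul_zero A]
      refine (ih (by rw [natDegree_taylor_divX]; omega) ?_).mul_left _
      rw [Complex.add_re, Complex.one_re]
      push_cast at hA
      linarith
    have hconst := (hasSum_poch_div_factorial (a := A) (by push_cast at hA; linarith)).mul_left
      (P.coeff 0)
    rw [mul_zero] at hconst
    simpa only [← pochTerm_eq_add, zero_add] using hconst.add hQ

lemma poch_mul_prod_div_eq_pochTerm {ι : Type*} [Fintype ι] (A : ℂ) (m : ι → ℕ) {B : ι → ℂ}
    (hB : ∀ j, ∀ k : ℕ, B j + k ≠ 0) (k : ℕ) :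
    (poch A k * ∏ j, poch (B j + m j) k) / ((k ! : ℂ) * ∏ j, poch (B j) k) =
      pochTerm A (∏ j, taylor (B j) (ascPochhammer ℂ (m j))) k / ∏ j, poch (B j) (m j) := by
  have hk : (k ! : ℂ) ≠ 0 := by exact_mod_cast k.factorial_ne_zero
  have hBk : ∏ j, poch (B j) k ≠ 0 := prod_ne_zero_iff.mpr fun j _ => poch_ne_zero (hB j) k
  have hBm : ∏ j, poch (B j) (m j) ≠ 0 := prod_ne_zero_iff.mpr fun j _ => poch_ne_zero (hB j) _
  have hswap : (∏ j, poch (B j + m j) k) * ∏ j, poch (B j) (m j) =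
      (∏ j, poch (k + B j) (m j)) * ∏ j, poch (B j) k := by
    simp only [← prod_mul_distrib, add_comm (k : ℂ)]
    exact prod_congr rfl fun j _ => by rw [mul_comm, poch_mul_poch_add_comm, mul_comm]
  simp only [pochTerm, eval_prod, taylor_eval, ← poch_eq_eval_ascPochhammer]
  rw [div_div, div_eq_div_iff (mul_ne_zero hk hBk) (mul_ne_zero hk hBm)]
  linear_combination (poch A k * k !) * hswap

lemma natDegree_prod_taylor_ascPochhammer_le {ι : Type*} [Fintype ι] (m : ι → ℕ) (B : ι → ℂ) :
    (∏ j, taylor (B j) (ascPochhammer ℂ (m j))).natDegree ≤ ∑ j, m j :=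
  (natDegree_prod_le _ _).trans_eq <| by simp [natDegree_taylor, ascPochhammer_natDegree]

theorem karlsson_minton_vanishing (r : ℕ) (m : Fin r → ℕ) (B : Fin r → ℂ)
    (hB : ∀ j : Fin r, ∀ k : ℕ, B j + k ≠ 0)
    (A : ℂ) (hA : A.re + ∑ j : Fin r, (m j : ℝ) < 0) :
    Summable (fun k : ℕ =>
        ‖(poch A k * ∏ j : Fin r, poch (B j + (m j : ℂ)) k) /
          ((k.factorial : ℂ) * ∏ j : Fin r, poch (B j) k)‖) ∧
    ∑' k : ℕ, (poch A k * ∏ j : Fin r, poch (B j + (m j : ℂ)) k) /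
          ((k.factorial : ℂ) * ∏ j : Fin r, poch (B j) k) = 0 := by
  set P : ℂ[X] := ∏ j, taylor (B j) (ascPochhammer ℂ (m j))
  have hP : A.re + P.natDegree < 0 := by
    have : (P.natDegree : ℝ) ≤ ∑ j, (m j : ℝ) := by
      exact_mod_cast natDegree_prod_taylor_ascPochhammer_le m B
    linarith
  simp_rw [poch_mul_prod_div_eq_pochTerm A m hB, norm_div]
  refine ⟨(summable_norm_pochTerm hP).div_const _, ?_⟩
  rw [tsum_div_const, (hasSum_pochTerm hP).tsum_eq, zero_div]
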